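/- Let (a_n)_{n≥0} be a sequence of nonzero complex numbers satisfying |a_0| ≥ |a_1| ≥ |a_2| ≥ ⋯ and ∑_{n=0}^∞ |a_n|² < ∞, and let T be the corresponding weighted shift. Then for a sequence (c_k)_{k≥1} of complex numbers, the sequence of partial sums p_n(T) = ∑_{k=1}^n c_k T^k converges in the operator norm to an element of A_T if and only if ∑_{k=1}^∞ |c_k|² |a_0 a_1 ⋯ a_{k−1}|² < ∞. -/

import Mathlib

/-!
Since `|a_0| ≥ |a_1| ≥ ⋯`, the weight product `a_n ⋯ a_{n+k-1}` picked up by `T^k e_n` is at most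
`|a_n| / |a_0|` times `|a_0 ⋯ a_{k-1}|`. Hence for a block `R = ∑_{k ∈ s} c_k T^k` of the series,
`‖R e_n‖² ≤ (|a_n| / |a_0|)² ∑_{k ∈ s} |c_k|² |a_0 ⋯ a_{k-1}|²`, and summing over `n` (which
converges because `∑ |a_n|² < ∞`) bounds the Hilbert–Schmidt norm, hence the operator norm, of `R`:
the partial sums are Cauchy as soon as
`∑ |c_k|² |a_0 ⋯ a_{k-1}|² < ∞`. Conversely, if `p_n(T) → S` then `c_k a_0 ⋯ a_{k-1}` is the
`k`-th coordinate of `S e_0 ∈ ℓ²`.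
-/

noncomputable section

/-- `H = ℓ²(ℕ)` over `ℂ`. -/
abbrev H : Type := lp (fun _ : ℕ => ℂ) 2

/-- The standard orthonormal basis of `ℓ²(ℕ)`. -/
def e (n : ℕ) : H := lp.single 2 n 1

/-- `A_T`: the operator-norm closure of the polynomials in `T` with zero constant term. -/
def polyAlg (T : H →L[ℂ] H) : Set (H →L[ℂ] H) :=
  closure ((NonUnitalAlgebra.adjoin ℂ {T} : NonUnitalSubalgebra ℂ (H →L[ℂ] H)) :
    Set (H →L[ℂ] H))

open Finset Filter Topology

section Generic

variable {𝕜 E F ι : Type*} [RCLike 𝕜] [NormedAddCommGroup E] [InnerProductSpace 𝕜 E]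

theorem Orthonormal.norm_sum_smul_sq {v : ι → E} (hv : Orthonormal 𝕜 v) (d : ι → 𝕜)
    (s : Finset ι) : ‖∑ i ∈ s, d i • v i‖ ^ 2 = ∑ i ∈ s, ‖d i‖ ^ 2 :=
  hv.orthogonalFamily.norm_sum d s

theorem Orthonormal.summable_norm_sq_of_tendsto_sum_range {v : ℕ → E} (hv : Orthonormal 𝕜 v)
    {d : ℕ → 𝕜} {x : E}
    (hx : Tendsto (fun n => ∑ i ∈ range n, d i • v i) atTop (𝓝 x)) :
    Summable fun i => ‖d i‖ ^ 2 := by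
  have hcoeff : ∀ i, inner 𝕜 (v i) x = d i := fun i =>
    tendsto_nhds_unique (tendsto_const_nhds.inner hx) <| tendsto_const_nhds.congr' <|
      (eventually_gt_atTop i).mono fun n hn => (hv.inner_right_sum d (mem_range.2 hn)).symm
  simpa only [hcoeff] using hv.inner_products_summable (x := x)

theorem HilbertBasis.opNorm_sq_le_tsum [NormedAddCommGroup F] [NormedSpace 𝕜 F]
    (b : HilbertBasis ι 𝕜 E) (S : E →L[𝕜] F) (hS : Summable fun i => ‖S (b i)‖ ^ 2) :
    ‖S‖ ^ 2 ≤ ∑' i, ‖S (b i)‖ ^ 2 := by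
  set M := ∑' i, ‖S (b i)‖ ^ 2
  suffices ‖S‖ ≤ √M from (Real.le_sqrt (norm_nonneg _) (tsum_nonneg fun _ => sq_nonneg _)).1 this
  refine S.opNorm_le_bound (Real.sqrt_nonneg _) fun x => ?_
  have hSx : HasSum (fun i => b.repr x i • S (b i)) (S x) := by
    simpa only [map_smul] using (b.hasSum_repr x).mapL S
  refine le_of_tendsto' hSx.norm fun s => ?_
  calc ‖∑ i ∈ s, b.repr x i • S (b i)‖
      ≤ ∑ i ∈ s, ‖b.repr x i‖ * ‖S (b i)‖ := (norm_sum_le _ _).trans_eq (by simp only [norm_smul])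
    _ ≤ √(∑ i ∈ s, ‖b.repr x i‖ ^ 2) * √(∑ i ∈ s, ‖S (b i)‖ ^ 2) :=
        Real.sum_mul_le_sqrt_mul_sqrt _ _ _
    _ ≤ √(‖x‖ ^ 2) * √M := by
        gcongr
        · simpa only [b.repr_apply_apply] using b.orthonormal.sum_inner_products_le x
        · exact hS.sum_le_tsum s fun i _ => sq_nonneg _
    _ = √M * ‖x‖ := by rw [Real.sqrt_sq (norm_nonneg _), mul_comm]

theorem summable_of_norm_sum_sq_le [NormedAddCommGroup F] [CompleteSpace F] {f : ι → F}
    {g : ι → ℝ} (hg : Summable g) (K : ℝ)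
    (hfg : ∀ s : Finset ι, ‖∑ i ∈ s, f i‖ ^ 2 ≤ K * ∑ i ∈ s, g i) : Summable f := by
  refine summable_iff_vanishing_norm.2 fun ε hε => ?_
  obtain ⟨s, hs⟩ := summable_iff_vanishing_norm.1 hg (ε ^ 2 / (|K| + 1)) (by positivity)
  refine ⟨s, fun t ht => ?_⟩
  have hgt : |∑ i ∈ t, g i| * (|K| + 1) < ε ^ 2 :=
    (lt_div_iff₀ (by positivity)).1 (by simpa only [Real.norm_eq_abs] using hs t ht)
  have hKg : K * ∑ i ∈ t, g i ≤ |∑ i ∈ t, g i| * (|K| + 1) := by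
    nlinarith [le_abs_self (K * ∑ i ∈ t, g i), abs_mul K (∑ i ∈ t, g i), abs_nonneg K,
      abs_nonneg (∑ i ∈ t, g i)]
  exact lt_of_pow_lt_pow_left₀ 2 hε.le ((hfg t).trans_lt (hKg.trans_lt hgt))

end Generic

theorem pow_succ_mem_nonUnitalAdjoin_singleton {R A : Type*} [CommSemiring R] [Semiring A]
    [Algebra R A] (x : A) (k : ℕ) : x ^ (k + 1) ∈ NonUnitalAlgebra.adjoin R {x} := by
  have hx := NonUnitalAlgebra.self_mem_adjoin_singleton R x
  induction k with
  | zero => simpa only [zero_add, pow_one] using hx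
  | succ k ih => exact pow_succ x (k + 1) ▸ mul_mem ih hx

theorem sum_Icc_one_eq_sum_range {M : Type*} [AddCommMonoid M] (f : ℕ → M) (n : ℕ) :
    ∑ k ∈ Icc 1 n, f k = ∑ k ∈ range n, f (k + 1) := by
  rw [range_eq_Ico, sum_Ico_add' f 0 n 1, zero_add, Ico_add_one_right_eq_Icc]

theorem prod_range_succ_add_mul_le_of_antitone {f : ℕ → ℝ} (hf : Antitone f)
    (hf0 : ∀ n, 0 ≤ f n) (n k : ℕ) :
    (∏ i ∈ range (k + 1), f (n + i)) * f 0 ≤ f n * ∏ i ∈ range (k + 1), f i := by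
  rw [prod_range_succ', prod_range_succ', add_zero]
  have hprod : ∏ i ∈ range k, f (n + (i + 1)) ≤ ∏ i ∈ range k, f (i + 1) :=
    prod_le_prod (fun i _ => hf0 _) fun i _ => hf (by omega)
  calc (∏ i ∈ range k, f (n + (i + 1))) * f n * f 0
      ≤ (∏ i ∈ range k, f (i + 1)) * f n * f 0 := by
        gcongr
        exacts [hf0 0, hf0 n]
    _ = f n * ((∏ i ∈ range k, f (i + 1)) * f 0) := by ring

def stdHilbertBasis : HilbertBasis ℕ ℂ H := HilbertBasis.ofRepr (LinearIsometryEquiv.refl ℂ H)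

theorem coe_stdHilbertBasis : ⇑stdHilbertBasis = e := by
  funext n
  classical
  rw [← stdHilbertBasis.repr_symm_single]
  rfl

theorem orthonormal_e : Orthonormal ℂ e := coe_stdHilbertBasis ▸ stdHilbertBasis.orthonormal

section WeightedShift

variable {a : ℕ → ℂ} {T : H →L[ℂ] H}

theorem pow_apply_e (hT : ∀ n, T (e n) = a n • e (n + 1)) (k n : ℕ) :
    (T ^ k) (e n) = (∏ i ∈ range k, a (n + i)) • e (n + k) := by
  induction k generalizing n with
  | zero => simp
  | succ k ih =>
    rw [pow_succ, mul_apply_eq_comp, hT, map_smul, ih, smul_smul, prod_range_succ', add_zero,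
      mul_comm]
    simp only [add_right_comm n 1, add_assoc n]

theorem sum_smul_pow_succ_apply_e (hT : ∀ n, T (e n) = a n • e (n + 1)) (c : ℕ → ℂ)
    (s : Finset ℕ) (n : ℕ) :
    (∑ k ∈ s, c (k + 1) • T ^ (k + 1)) (e n) =
      ∑ k ∈ s, (c (k + 1) * ∏ i ∈ range (k + 1), a (n + i)) • e (n + (k + 1)) := by
  simp only [_root_.sum_apply, smul_apply, pow_apply_e hT, smul_smul]

theorem norm_sum_smul_pow_succ_apply_e_sq_mul_le (hT : ∀ n, T (e n) = a n • e (n + 1))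
    (hdec : Antitone fun n => ‖a n‖) (c : ℕ → ℂ) (s : Finset ℕ) (n : ℕ) :
    ‖(∑ k ∈ s, c (k + 1) • T ^ (k + 1)) (e n)‖ ^ 2 * ‖a 0‖ ^ 2 ≤
      ‖a n‖ ^ 2 * ∑ k ∈ s, ‖c (k + 1)‖ ^ 2 * ‖∏ i ∈ range (k + 1), a i‖ ^ 2 := by
  have hv : Orthonormal ℂ fun k => e (n + (k + 1)) :=
    orthonormal_e.comp _ fun k l h => by omega
  rw [sum_smul_pow_succ_apply_e hT, hv.norm_sum_smul_sq, sum_mul, mul_sum]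
  refine sum_le_sum fun k _ => ?_
  have hweight := prod_range_succ_add_mul_le_of_antitone hdec (fun _ => norm_nonneg _) n k
  simp only [← norm_prod] at hweight
  calc ‖c (k + 1) * ∏ i ∈ range (k + 1), a (n + i)‖ ^ 2 * ‖a 0‖ ^ 2
      = ‖c (k + 1)‖ ^ 2 * (‖∏ i ∈ range (k + 1), a (n + i)‖ * ‖a 0‖) ^ 2 := by
        rw [norm_mul]; ring
    _ ≤ ‖c (k + 1)‖ ^ 2 * (‖a n‖ * ‖∏ i ∈ range (k + 1), a i‖) ^ 2 := by gcongr
    _ = ‖a n‖ ^ 2 * (‖c (k + 1)‖ ^ 2 * ‖∏ i ∈ range (k + 1), a i‖ ^ 2) := by ring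

theorem norm_sum_smul_pow_succ_sq_le (hT : ∀ n, T (e n) = a n • e (n + 1))
    (hdec : Antitone fun n => ‖a n‖) (ha0 : a 0 ≠ 0) (hsum : Summable fun n => ‖a n‖ ^ 2)
    (c : ℕ → ℂ) (s : Finset ℕ) :
    ‖∑ k ∈ s, c (k + 1) • T ^ (k + 1)‖ ^ 2 ≤
      (∑' n, ‖a n‖ ^ 2) / ‖a 0‖ ^ 2 *
        ∑ k ∈ s, ‖c (k + 1)‖ ^ 2 * ‖∏ i ∈ range (k + 1), a i‖ ^ 2 := by
  set R := ∑ k ∈ s, c (k + 1) • T ^ (k + 1)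
  set G := ∑ k ∈ s, ‖c (k + 1)‖ ^ 2 * ‖∏ i ∈ range (k + 1), a i‖ ^ 2
  have hRe : ∀ n, ‖R (e n)‖ ^ 2 ≤ ‖a n‖ ^ 2 * (G / ‖a 0‖ ^ 2) := fun n => by
    rw [mul_div_assoc', le_div_iff₀ (by positivity)]
    exact norm_sum_smul_pow_succ_apply_e_sq_mul_le hT hdec c s n
  have hRe_sum : Summable fun n => ‖R (e n)‖ ^ 2 :=
    (hsum.mul_right _).of_nonneg_of_le (fun _ => sq_nonneg _) hRe
  calc ‖R‖ ^ 2 ≤ ∑' n, ‖R (e n)‖ ^ 2 := by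
        simpa only [coe_stdHilbertBasis] using
          stdHilbertBasis.opNorm_sq_le_tsum R (coe_stdHilbertBasis ▸ hRe_sum)
    _ ≤ ∑' n, ‖a n‖ ^ 2 * (G / ‖a 0‖ ^ 2) := hRe_sum.tsum_le_tsum hRe (hsum.mul_right _)
    _ = (∑' n, ‖a n‖ ^ 2) / ‖a 0‖ ^ 2 * G := by rw [tsum_mul_right]; ring

end WeightedShift

/-- For a weighted shift with nonzero weights, `|a_0| ≥ |a_1| ≥ ⋯` and `∑ |a_n|² < ∞`:
the partial sums `p_n(T) = ∑_{k=1}^n c_k T^k` converge in operator norm to an element of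
`A_T` if and only if `∑_{k=1}^∞ |c_k|² |a_0 ⋯ a_{k-1}|² < ∞`. -/
theorem partial_sums_converge_iff (a : ℕ → ℂ) (ha : ∀ n, a n ≠ 0)
    (hdec : ∀ n, ‖a (n + 1)‖ ≤ ‖a n‖)
    (hsum : Summable fun n => ‖a n‖ ^ 2)
    (T : H →L[ℂ] H) (hT : ∀ n, T (e n) = a n • e (n + 1))
    (c : ℕ → ℂ) :
    (∃ S ∈ polyAlg T,
        Filter.Tendsto (fun n : ℕ => ∑ k ∈ Finset.Icc 1 n, c k • T ^ k)
          Filter.atTop (nhds S)) ↔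
      Summable (fun k : ℕ =>
        ‖c (k + 1)‖ ^ 2 * ‖∏ i ∈ Finset.range (k + 1), a i‖ ^ 2) := by
  simp only [sum_Icc_one_eq_sum_range fun k => c k • T ^ k]
  constructor
  · rintro ⟨S, -, hS⟩
    have hSe : Tendsto (fun n => ∑ k ∈ range n, (c (k + 1) * ∏ i ∈ range (k + 1), a i) • e (k + 1))
        atTop (𝓝 (S (e 0))) := by
      simpa only [Function.comp_def, ContinuousLinearMap.apply_apply,
        sum_smul_pow_succ_apply_e hT, zero_add] using
        ((ContinuousLinearMap.apply ℂ H (e 0)).continuous.tendsto S).comp hS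
    simpa only [norm_mul, mul_pow] using
      (orthonormal_e.comp _ (add_left_injective 1)).summable_norm_sq_of_tendsto_sum_range hSe
  · intro hcoeff
    obtain ⟨S, hS⟩ := summable_of_norm_sum_sq_le hcoeff _
      (norm_sum_smul_pow_succ_sq_le hT (antitone_nat_of_succ_le hdec) (ha 0) hsum c)
    refine ⟨S, mem_closure_of_tendsto hS.tendsto_sum_nat (Eventually.of_forall fun n => ?_),
      hS.tendsto_sum_nat⟩
    exact sum_mem fun k _ => SMulMemClass.smul_mem _ (pow_succ_mem_nonUnitalAdjoin_singleton T k)
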